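/- arXiv:1311.6423 — 3 statements merged into one kernel-verified Lean document; each statement's English description precedes it below -/
import Mathlib

section
/- Let X denote the number of rainbow perfect matchings in K^{(n)}_{n,k} with random n-coloring, k ≥ 2 fixed. Then E[X^2] ≤ (1+o(1)) · E[X]^2 as n → ∞. -/
open Filter

/-- `M` is a perfect matching of the complete `k`-partite `k`-uniform hypergraph with
parts `Fin n`. -/
def IsPerfectMatching (n k : ℕ) (M : Finset (Fin k → Fin n)) : Prop :=
  ∀ (i : Fin k) (v : Fin n), ∃! e, e ∈ M ∧ e i = v

/-- The number of rainbow perfect matchings of `K_{n,k}` under the edge-coloring `ι`. -/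
noncomputable def rainbowCount (n k : ℕ) (ι : (Fin k → Fin n) → Fin n) : ℕ :=
  Nat.card {M : Finset (Fin k → Fin n) //
    IsPerfectMatching n k M ∧ Set.InjOn ι (M : Set (Fin k → Fin n))}

/-!
Write `X = ∑_M 1[ι is rainbow on M]` over the perfect matchings `M`. A random colouring is rainbow
on a fixed `M` with probability `n! / n^n`, and on two perfect matchings sharing `s` edges with
probability at most `n! (n - s)! / n^(2n - s)`. Hence `E[X²] / E[X]²` is at most the average over
pairs `(M, M')` of `(n - s)! n^s / n!`. This weight increases in `s` by `(t - 1) n^(t - 1) (n - t)!`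
at step `t`, and for `k ≥ 2` a pair of perfect matchings shares `t` edges with probability at most
`1 / t!`: fixing `t` edges leaves at most `((n - t)!)^(k - 1)` completions, out of at least
`(n!)^(k - 1)` perfect matchings. By Abel summation `E[X²] / E[X]² ≤ 1 + f n` with
`f n = ∑_{t ≤ n} (t - 1) n^(t - 1) (n - t)! / (t! n!)`, and `f n → 0` by dominated convergence:
the `t`-th term is at most `(t - 1) 2^t / (t! n)` when `2t ≤ n` and at most `e^(2t) / t!` always.
-/

open Finset
open scoped Nat

variable {n k : ℕ}

namespace IsPerfectMatching

variable {M : Finset (Fin k → Fin n)}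

lemma eq_of_apply_eq (hM : IsPerfectMatching n k M) {e f : Fin k → Fin n} (he : e ∈ M)
    (hf : f ∈ M) {i : Fin k} (h : e i = f i) : e = f :=
  (hM i (f i)).unique ⟨he, h⟩ ⟨hf, rfl⟩

lemma injOn_eval (hM : IsPerfectMatching n k M) (i : Fin k) :
    Set.InjOn (fun e => e i) (M : Set (Fin k → Fin n)) :=
  fun _ he _ hf h => hM.eq_of_apply_eq he hf h

lemma card_eq [NeZero k] (hM : IsPerfectMatching n k M) : #M = n := by
  have himage : M.image (fun e => e 0) = univ :=
    eq_univ_of_forall fun v => mem_image.2 (hM 0 v).exists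
  rw [← card_image_of_injOn (hM.injOn_eval 0), himage, card_univ, Fintype.card_fin]

noncomputable def edge (hM : IsPerfectMatching n k M) (i : Fin k) (v : Fin n) : Fin k → Fin n :=
  (hM i v).exists.choose

lemma edge_mem (hM : IsPerfectMatching n k M) (i : Fin k) (v : Fin n) : hM.edge i v ∈ M :=
  (hM i v).exists.choose_spec.1

@[simp]
lemma edge_apply (hM : IsPerfectMatching n k M) (i : Fin k) (v : Fin n) : hM.edge i v i = v :=
  (hM i v).exists.choose_spec.2

lemma edge_apply_eq {e : Fin k → Fin n} (hM : IsPerfectMatching n k M) (he : e ∈ M) (i : Fin k) :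
    hM.edge i (e i) = e :=
  hM.eq_of_apply_eq (hM.edge_mem i (e i)) he (hM.edge_apply i (e i))

end IsPerfectMatching

lemma isPerfectMatching_image (g : Fin n → Fin k → Fin n)
    (hg : ∀ i, Function.Bijective fun v => g v i) : IsPerfectMatching n k (univ.image g) := by
  intro i v
  obtain ⟨u, rfl⟩ := (hg i).2 v
  refine ⟨g u, ⟨mem_image_of_mem g (mem_univ u), rfl⟩, ?_⟩
  rintro _ ⟨he, hei⟩
  obtain ⟨w, -, rfl⟩ := mem_image.1 he
  rw [(hg i).1 hei]

open scoped Classical in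
noncomputable def perfectMatchings (n k : ℕ) : Finset (Finset (Fin k → Fin n)) :=
  {M | IsPerfectMatching n k M}

@[simp]
lemma mem_perfectMatchings {M : Finset (Fin k → Fin n)} :
    M ∈ perfectMatchings n k ↔ IsPerfectMatching n k M := by
  simp [perfectMatchings]

def matchingOfPerms (σ : Fin k → Equiv.Perm (Fin n)) : Finset (Fin (k + 1) → Fin n) :=
  univ.image fun v => Fin.cons v fun j => σ j v

lemma isPerfectMatching_matchingOfPerms (σ : Fin k → Equiv.Perm (Fin n)) :
    IsPerfectMatching n (k + 1) (matchingOfPerms σ) :=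
  isPerfectMatching_image _ fun i => Fin.cases (by simp) (fun j => by simp) i

lemma matchingOfPerms_injective :
    Function.Injective (matchingOfPerms : (Fin k → Equiv.Perm (Fin n)) → _) := by
  intro σ τ h
  ext j v
  have hv : (Fin.cons v fun j => σ j v : Fin (k + 1) → Fin n) ∈ matchingOfPerms τ :=
    h ▸ mem_image_of_mem _ (mem_univ v)
  obtain ⟨u, -, hu⟩ := mem_image.1 hv
  obtain rfl : u = v := by simpa using congrFun hu 0
  exact congrArg Fin.val (by simpa using (congrFun hu j.succ).symm)

lemma factorial_pow_le_card_perfectMatchings : (n !) ^ k ≤ #(perfectMatchings n (k + 1)) := by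
  calc (n !) ^ k = Fintype.card (Fin k → Equiv.Perm (Fin n)) := by simp [Fintype.card_perm]
    _ ≤ #(perfectMatchings n (k + 1)) :=
      card_le_card_of_injOn matchingOfPerms
        (fun σ _ => mem_perfectMatchings.2 (isPerfectMatching_matchingOfPerms σ))
        matchingOfPerms_injective.injOn

namespace IsPerfectMatching

variable {M M' T : Finset (Fin (k + 1) → Fin n)}

lemma subset_of_edge_eq (hM : IsPerfectMatching n (k + 1) M)
    (hM' : IsPerfectMatching n (k + 1) M') (hTM : T ⊆ M) (hTM' : T ⊆ M')
    (h : ∀ v ∉ T.image (fun e => e 0), hM.edge 0 v = hM'.edge 0 v) : M ⊆ M' := by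
  intro e he
  by_cases hv : e 0 ∈ T.image (fun e => e 0)
  · obtain ⟨f, hfT, hfe⟩ := mem_image.1 hv
    rw [← hM.eq_of_apply_eq (hTM hfT) he hfe]
    exact hTM' hfT
  · rw [← hM.edge_apply_eq he 0, h _ hv]
    exact hM'.edge_mem 0 (e 0)

lemma edge_apply_notMem_image (hM : IsPerfectMatching n (k + 1) M) (hTM : T ⊆ M) {v : Fin n}
    (hv : v ∉ T.image (fun e => e 0)) (i : Fin (k + 1)) :
    hM.edge 0 v i ∉ T.image (fun e => e i) := by
  intro hi
  obtain ⟨f, hfT, hfi⟩ := mem_image.1 hi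
  refine hv (mem_image.2 ⟨f, hfT, ?_⟩)
  rw [hM.eq_of_apply_eq (hTM hfT) (hM.edge_mem 0 v) hfi, edge_apply]

end IsPerfectMatching

/-- A perfect matching containing `T` is determined by where its edges through the `n - #T`
vertices of part `0` not covered by `T` meet the other parts, injectively avoiding `T`. -/
lemma card_filter_subset_le (T : Finset (Fin (k + 1) → Fin n)) :
    #{M ∈ perfectMatchings n (k + 1) | T ⊆ M} ≤ ((n - #T)!) ^ k := by
  set S := {M ∈ perfectMatchings n (k + 1) | T ⊆ M}
  obtain hS | ⟨M₁, hM₁⟩ := S.eq_empty_or_nonempty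
  · simp [hS]
  have hS : ∀ M ∈ S, IsPerfectMatching n (k + 1) M ∧ T ⊆ M := by
    simp [S]
  set A : Fin (k + 1) → Finset (Fin n) := fun i => T.image fun e => e i
  have hA : ∀ i, Fintype.card {v // v ∉ A i} = n - #T := fun i => by
    rw [Fintype.card_subtype_compl, Fintype.card_coe, Fintype.card_fin,
      card_image_of_injOn (((hS M₁ hM₁).1.injOn_eval i).mono (hS M₁ hM₁).2)]
  let ψ : S → ∀ j : Fin k, {v // v ∉ A 0} ↪ {w // w ∉ A j.succ} := fun M j =>
    { toFun v := ⟨(hS M M.2).1.edge 0 v j.succ,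
        (hS M M.2).1.edge_apply_notMem_image (hS M M.2).2 v.2 j.succ⟩
      inj' a b hab := by
        have := (hS M M.2).1.eq_of_apply_eq ((hS M M.2).1.edge_mem 0 a)
          ((hS M M.2).1.edge_mem 0 b) (Subtype.ext_iff.1 hab)
        exact Subtype.ext (by simpa using congrFun this 0) }
  have hψ : Function.Injective ψ := by
    have hsub : ∀ M M' : S, ψ M = ψ M' → M.1 ⊆ M'.1 := fun M M' h =>
      (hS M M.2).1.subset_of_edge_eq (hS M' M'.2).1 (hS M M.2).2 (hS M' M'.2).2 fun v hv => by
        funext i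
        refine Fin.cases (by simp) (fun j => ?_) i
        exact Subtype.ext_iff.1 (DFunLike.congr_fun (congrFun h j) ⟨v, hv⟩)
    exact fun M M' h => Subtype.ext ((hsub M M' h).antisymm (hsub M' M h.symm))
  calc #S = Fintype.card S := (Fintype.card_coe S).symm
    _ ≤ _ := Fintype.card_le_of_injective ψ hψ
    _ = ((n - #T)!) ^ k := by
      simp [Fintype.card_embedding_eq, hA, Nat.descFactorial_self]

lemma card_filter_le_card_inter_le_choose_mul {M : Finset (Fin (k + 1) → Fin n)}
    (hM : IsPerfectMatching n (k + 1) M) (t : ℕ) :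
    #{M' ∈ perfectMatchings n (k + 1) | t ≤ #(M ∩ M')} ≤ n.choose t * ((n - t)!) ^ k := by
  set P := perfectMatchings n (k + 1)
  calc _ ≤ #((M.powersetCard t).biUnion fun T => {M' ∈ P | T ⊆ M'}) := by
        refine card_le_card fun M' hM' => ?_
        obtain ⟨hM'P, ht⟩ := mem_filter.1 hM'
        obtain ⟨T, hT, rfl⟩ := exists_subset_card_eq ht
        exact mem_biUnion.2 ⟨T, mem_powersetCard.2 ⟨hT.trans inter_subset_left, rfl⟩,
          mem_filter.2 ⟨hM'P, hT.trans inter_subset_right⟩⟩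
    _ ≤ ∑ T ∈ M.powersetCard t, #{M' ∈ P | T ⊆ M'} := card_biUnion_le
    _ ≤ ∑ T ∈ M.powersetCard t, ((n - t)!) ^ k :=
        sum_le_sum fun T hT => (mem_powersetCard.1 hT).2 ▸ card_filter_subset_le T
    _ = n.choose t * ((n - t)!) ^ k := by
        rw [sum_const, card_powersetCard, hM.card_eq, smul_eq_mul]

lemma choose_mul_factorial_pow_mul_factorial_le (hk : k ≠ 0) {t : ℕ} (ht : t ≤ n) :
    n.choose t * ((n - t)!) ^ k * t ! ≤ (n !) ^ k := by
  obtain ⟨j, rfl⟩ := Nat.exists_eq_succ_of_ne_zero hk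
  calc n.choose t * ((n - t)!) ^ (j + 1) * t ! = n ! * ((n - t)!) ^ j := by
        rw [← Nat.choose_mul_factorial_mul_factorial ht]; ring
    _ ≤ n ! * (n !) ^ j := by gcongr; exact Nat.sub_le n t
    _ = (n !) ^ (j + 1) := by ring

lemma card_filter_le_card_inter_mul_factorial_le (hk : k ≠ 0) {t : ℕ} (ht : t ≤ n) :
    #{p ∈ perfectMatchings n (k + 1) ×ˢ perfectMatchings n (k + 1) | t ≤ #(p.1 ∩ p.2)} * t ! ≤
      #(perfectMatchings n (k + 1) ×ˢ perfectMatchings n (k + 1)) := by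
  set P := perfectMatchings n (k + 1)
  have hfiber : #{p ∈ P ×ˢ P | t ≤ #(p.1 ∩ p.2)} = ∑ M ∈ P, #{M' ∈ P | t ≤ #(M ∩ M')} := by
    simp only [card_filter, sum_product]
  calc _ = ∑ M ∈ P, #{M' ∈ P | t ≤ #(M ∩ M')} * t ! := by rw [hfiber, sum_mul]
    _ ≤ ∑ _M ∈ P, (n !) ^ k := sum_le_sum fun M hM =>
        (Nat.mul_le_mul_right _ (card_filter_le_card_inter_le_choose_mul
          (mem_perfectMatchings.1 hM) t)).trans (choose_mul_factorial_pow_mul_factorial_le hk ht)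
    _ = #P * (n !) ^ k := by rw [sum_const, smul_eq_mul]
    _ ≤ #P * #P := Nat.mul_le_mul_left _ factorial_pow_le_card_perfectMatchings
    _ = #(P ×ˢ P) := (card_product P P).symm

section Colorings

variable {α β : Type*} [Fintype α] [DecidableEq α] [Fintype β]

lemma card_injOn (s : Finset α) :
    Nat.card {f : α → β // Set.InjOn f s} =
      (Fintype.card β).descFactorial #s * Fintype.card β ^ (Fintype.card α - #s) := by
  let e : {f : α → β // Set.InjOn f s} ≃ (s ↪ β) × ({a // a ∉ s} → β) :=
    ((Equiv.piEquivPiSubtypeProd (· ∈ s) fun _ => β).subtypeEquiv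
      fun _ => Set.injOn_iff_injective).trans
      (Equiv.prodSubtypeFstEquivSubtypeProd.trans
        ((Equiv.subtypeInjectiveEquivEmbedding _ _).prodCongr (Equiv.refl _)))
  rw [Nat.card_congr e, Nat.card_eq_fintype_card, Fintype.card_prod, Fintype.card_embedding_eq,
    Fintype.card_fun, Fintype.card_subtype_compl, Fintype.card_coe]

/-- If `f` is injective on `s` with `#s = #β`, it is a bijection `s ≃ β`, and on `s' \ s` it is
recorded by the injection `x ↦ (f|ₛ)⁻¹ (f x)` into `s \ s'`. -/
lemma card_injOn_and_injOn_le {s s' : Finset α} (hs : #s = Fintype.card β)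
    (hs' : #s' = Fintype.card β) :
    Nat.card {f : α → β // Set.InjOn f s ∧ Set.InjOn f s'} ≤
      (Fintype.card β)! * (Fintype.card β - #(s ∩ s'))! *
        Fintype.card β ^ (Fintype.card α - #(s ∪ s')) := by
  classical
  let E (f : {f : α → β // Set.InjOn f s ∧ Set.InjOn f s'}) : s ≃ β :=
    Equiv.ofBijective (fun x => f.1 x) <| (Fintype.bijective_iff_injective_and_card _).2
      ⟨fun x y h => Subtype.ext (f.2.1 x.2 y.2 h), by simp [hs]⟩
  have hE : ∀ (f : {f : α → β // Set.InjOn f s ∧ Set.InjOn f s'}) (b : β),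
      f.1 ((E f).symm b).1 = b := fun f b => (E f).apply_symm_apply b
  have hEmem : ∀ f (x : ↥(s' \ s)), ((E f).symm (f.1 x)).1 ∈ s \ s' := fun f x => by
    have hx := mem_sdiff.1 x.2
    refine mem_sdiff.2 ⟨((E f).symm (f.1 x)).2, fun hmem => hx.2 ?_⟩
    rw [← f.2.2 hmem hx.1 (hE f _)]
    exact ((E f).symm (f.1 x)).2
  let Φ (f : {f : α → β // Set.InjOn f s ∧ Set.InjOn f s'}) :
      (s ≃ β) × (↥(s' \ s) ↪ ↥(s \ s')) × ({a // a ∉ s ∪ s'} → β) :=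
    (E f, ⟨fun x => ⟨_, hEmem f x⟩, fun x y h => Subtype.ext <| f.2.2 (mem_sdiff.1 x.2).1
      (mem_sdiff.1 y.2).1 <| by simpa [hE] using congrArg (f.1 ·.1) h⟩, fun x => f.1 x)
  let Ψ (p : (s ≃ β) × (↥(s' \ s) ↪ ↥(s \ s')) × ({a // a ∉ s ∪ s'} → β)) (a : α) : β :=
    if ha : a ∈ s then p.1 ⟨a, ha⟩
    else if ha' : a ∈ s' then
      p.1 ⟨(p.2.1 ⟨a, mem_sdiff.2 ⟨ha', ha⟩⟩).1, (mem_sdiff.1 (p.2.1 _).2).1⟩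
    else p.2.2 ⟨a, by simp [ha, ha']⟩
  have hΨ : ∀ f, Ψ (Φ f) = f.1 := fun f => by
    funext a
    simp only [Ψ]
    split_ifs with ha ha'
    · rfl
    · exact hE f _
    · rfl
  have hΦ : Function.Injective Φ := fun f f' h => Subtype.ext (by rw [← hΨ f, ← hΨ f', h])
  have hcard : #(s \ s') = Fintype.card β - #(s ∩ s') ∧
      #(s' \ s) = Fintype.card β - #(s ∩ s') := by
    rw [card_sdiff, card_sdiff, hs, hs', inter_comm]
    exact ⟨rfl, rfl⟩
  refine (Nat.card_le_card_of_injective Φ hΦ).trans_eq ?_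
  rw [Nat.card_eq_fintype_card, Fintype.card_prod, Fintype.card_prod,
    Fintype.card_equiv (Fintype.equivOfCardEq (by simp [hs])), Fintype.card_embedding_eq,
    Fintype.card_fun, Fintype.card_subtype_compl, Fintype.card_coe, Fintype.card_coe,
    Fintype.card_coe, hcard.1, hcard.2, Nat.descFactorial_self, Fintype.card_coe, hs, mul_assoc]

end Colorings

def overlapWeight (n s : ℕ) : ℕ := (n - s)! * n ^ s

def overlapIncrement (n t : ℕ) : ℕ := (t - 1) * n ^ (t - 1) * (n - t)!

lemma overlapWeight_succ {s : ℕ} (hs : s < n) :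
    overlapWeight n (s + 1) = overlapWeight n s + overlapIncrement n (s + 1) := by
  obtain ⟨r, rfl⟩ := Nat.exists_eq_add_of_lt hs
  simp only [overlapWeight, overlapIncrement, Nat.add_sub_cancel,
    show s + r + 1 - s = r + 1 by omega, show s + r + 1 - (s + 1) = r by omega, Nat.factorial_succ]
  ring

lemma overlapWeight_eq_factorial_add_sum {s : ℕ} (hs : s ≤ n) :
    overlapWeight n s = n ! + ∑ t ∈ Icc 1 s, overlapIncrement n t := by
  induction s with
  | zero => simp [overlapWeight]
  | succ s ih =>
    rw [overlapWeight_succ hs, ih (by omega), sum_Icc_succ_top (by omega), add_assoc]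

lemma sum_sum_Icc_eq_sum_card_filter_smul {ι R : Type*} [AddCommMonoid R] (Q : Finset ι)
    (w : ι → ℕ) (a : ℕ → R) (hw : ∀ p ∈ Q, w p ≤ n) :
    ∑ p ∈ Q, ∑ t ∈ Icc 1 (w p), a t = ∑ t ∈ Icc 1 n, #{p ∈ Q | t ≤ w p} • a t := by
  rw [sum_comm' (t' := Icc 1 n) (s' := fun t => {p ∈ Q | t ≤ w p})]
  · simp only [sum_const]
  · intro p t
    simp only [mem_Icc, mem_filter]
    constructor
    · rintro ⟨hp, ht⟩
      exact ⟨⟨hp, ht.2⟩, ht.1, ht.2.trans (hw p hp)⟩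
    · rintro ⟨⟨hp, ht⟩, ht'⟩
      exact ⟨hp, ht'.1, ht⟩

noncomputable def overlapExcess (n : ℕ) : ℝ :=
  ∑ t ∈ Icc 1 n, (overlapIncrement n t : ℝ) / (t ! * n !)

/-- Abel summation of the increasing weight `overlapWeight n` against the tail counts. -/
lemma sum_overlapWeight_le {ι : Type*} (Q : Finset ι) (w : ι → ℕ) (hw : ∀ p ∈ Q, w p ≤ n)
    (hQ : ∀ t ∈ Icc 1 n, #{p ∈ Q | t ≤ w p} * t ! ≤ #Q) :
    ∑ p ∈ Q, (overlapWeight n (w p) : ℝ) ≤ #Q * n ! * (1 + overlapExcess n) := by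
  have htail : ∀ t ∈ Icc 1 n, (#{p ∈ Q | t ≤ w p} : ℝ) ≤ #Q / t ! := fun t ht => by
    rw [le_div_iff₀ (by positivity)]
    exact_mod_cast hQ t ht
  calc ∑ p ∈ Q, (overlapWeight n (w p) : ℝ)
      = ∑ p ∈ Q, ((n ! : ℝ) + ∑ t ∈ Icc 1 (w p), (overlapIncrement n t : ℝ)) :=
        sum_congr rfl fun p hp => by
          rw [overlapWeight_eq_factorial_add_sum (hw p hp)]
          push_cast
          rfl
    _ = #Q * n ! + ∑ t ∈ Icc 1 n, (#{p ∈ Q | t ≤ w p} : ℝ) * overlapIncrement n t := by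
        simp only [sum_add_distrib, sum_const, nsmul_eq_mul,
          sum_sum_Icc_eq_sum_card_filter_smul Q w _ hw]
    _ ≤ #Q * n ! + ∑ t ∈ Icc 1 n, (#Q / t ! : ℝ) * overlapIncrement n t := by
        gcongr with t ht
        exact htail t ht
    _ = #Q * n ! * (1 + overlapExcess n) := by
        rw [overlapExcess, mul_add, mul_one, mul_sum]
        congr 1
        refine sum_congr rfl fun t _ => ?_
        field_simp

lemma pow_mul_factorial_sub_le {t : ℕ} (h : 2 * t ≤ n) : n ^ t * (n - t)! ≤ 2 ^ t * n ! :=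
  calc n ^ t * (n - t)! ≤ (2 * (n + 1 - t)) ^ t * (n - t)! := by gcongr; omega
    _ = 2 ^ t * ((n + 1 - t) ^ t * (n - t)!) := by ring
    _ ≤ 2 ^ t * (n.descFactorial t * (n - t)!) := by
        gcongr; exact Nat.pow_sub_le_descFactorial n t
    _ = 2 ^ t * n ! := by rw [mul_comm _ (n - t)!, Nat.factorial_mul_descFactorial (by omega)]

lemma overlapIncrement_mul_le {t : ℕ} (h : 2 * t ≤ n) :
    overlapIncrement n t * n ≤ (t - 1) * (2 ^ t * n !) := by
  obtain _ | t := t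
  · simp [overlapIncrement]
  calc overlapIncrement n (t + 1) * n = t * (n ^ (t + 1) * (n - (t + 1))!) := by
        simp only [overlapIncrement, Nat.add_sub_cancel, pow_succ]; ring
    _ ≤ t * (2 ^ (t + 1) * n !) := Nat.mul_le_mul_left _ (pow_mul_factorial_sub_le h)

lemma overlapIncrement_le_pow_self {t : ℕ} (ht : t ≤ n) : overlapIncrement n t ≤ n ^ n := by
  obtain _ | t := t
  · simp [overlapIncrement]
  calc overlapIncrement n (t + 1) ≤ n * n ^ t * n ^ (n - (t + 1)) := by
        simp only [overlapIncrement, Nat.add_sub_cancel]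
        gcongr
        · omega
        · exact (Nat.factorial_le_pow _).trans (Nat.pow_le_pow_left (Nat.sub_le _ _) _)
    _ = n ^ n := by rw [← pow_succ', ← pow_add]; congr 1; omega

noncomputable def overlapExcessTerm (n t : ℕ) : ℝ :=
  if t ≤ n then (overlapIncrement n t : ℝ) / (t ! * n !) else 0

lemma overlapExcessTerm_nonneg (n t : ℕ) : 0 ≤ overlapExcessTerm n t := by
  unfold overlapExcessTerm
  split_ifs <;> positivity

lemma overlapExcess_eq_tsum (n : ℕ) : overlapExcess n = ∑' t, overlapExcessTerm n t := by
  rw [tsum_eq_sum (s := Icc 1 n)]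
  · refine sum_congr rfl fun t ht => ?_
    rw [overlapExcessTerm, if_pos (mem_Icc.1 ht).2]
  · intro t ht
    rcases Nat.eq_zero_or_pos t with rfl | ht₀
    · simp [overlapExcessTerm, overlapIncrement]
    · rw [overlapExcessTerm, if_neg fun htn => ht (mem_Icc.2 ⟨ht₀, htn⟩)]

lemma overlapExcessTerm_le_div {t : ℕ} (h : 2 * t ≤ n) :
    overlapExcessTerm n t ≤ (t - 1 : ℕ) * 2 ^ t / t ! / n := by
  rw [overlapExcessTerm, if_pos (by omega)]
  rcases Nat.eq_zero_or_pos n with rfl | hn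
  · simp [show t = 0 by omega, overlapIncrement]
  rw [div_div, div_le_div_iff₀ (by positivity) (by positivity)]
  have := overlapIncrement_mul_le h
  calc (overlapIncrement n t : ℝ) * (t ! * n) = overlapIncrement n t * n * t ! := by ring
    _ ≤ (t - 1 : ℕ) * (2 ^ t * n !) * t ! := by
        exact_mod_cast Nat.mul_le_mul_right (t !) this
    _ = (t - 1 : ℕ) * 2 ^ t * (t ! * n !) := by ring

lemma overlapExcessTerm_le_exp (n t : ℕ) : overlapExcessTerm n t ≤ Real.exp 2 ^ t / t ! := by
  by_cases htn : t ≤ n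
  swap
  · rw [overlapExcessTerm, if_neg htn]; positivity
  rcases le_or_gt (2 * t) n with h | h
  · calc overlapExcessTerm n t ≤ (t - 1 : ℕ) * 2 ^ t / t ! / n := overlapExcessTerm_le_div h
      _ ≤ 2 ^ t / t ! := by
          refine div_le_of_le_mul₀ (by positivity) (by positivity) ?_
          rw [mul_div_assoc, mul_comm]
          gcongr
          exact_mod_cast (Nat.sub_le t 1).trans htn
      _ ≤ Real.exp 2 ^ t / t ! := by
          gcongr
          linarith [Real.add_one_le_exp 2]
  · rw [overlapExcessTerm, if_pos htn]
    calc (overlapIncrement n t : ℝ) / (t ! * n !) ≤ (n : ℝ) ^ n / n ! / t ! := by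
          rw [div_div, mul_comm (t ! : ℝ)]
          gcongr
          exact_mod_cast overlapIncrement_le_pow_self htn
      _ ≤ Real.exp n / t ! := by
          gcongr; exact Real.pow_div_factorial_le_exp _ (by positivity) _
      _ ≤ Real.exp 2 ^ t / t ! := by
          rw [← Real.exp_nat_mul]
          gcongr
          exact_mod_cast (by omega : n ≤ t * 2)

lemma tendsto_overlapExcess : Tendsto overlapExcess atTop (nhds 0) := by
  have hpointwise : ∀ t, Tendsto (overlapExcessTerm · t) atTop (nhds 0) := fun t =>
    squeeze_zero' (.of_forall fun n => overlapExcessTerm_nonneg n t)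
      ((eventually_ge_atTop (2 * t)).mono fun n h => overlapExcessTerm_le_div h)
      (tendsto_const_div_atTop_nhds_zero_nat _)
  simpa [← funext overlapExcess_eq_tsum] using
    tendsto_tsum_of_dominated_convergence (Real.summable_pow_div_factorial (Real.exp 2))
      hpointwise
      (.of_forall fun n t => by
        rw [Real.norm_of_nonneg (overlapExcessTerm_nonneg n t)]
        exact overlapExcessTerm_le_exp n t)

lemma sum_card_filter_eq_sum_natCard {X Y : Type*} [Fintype X] (S : Finset Y) (P : X → Y → Prop)
    [∀ x y, Decidable (P x y)] :
    ∑ x, #{y ∈ S | P x y} = ∑ y ∈ S, Nat.card {x // P x y} := by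
  simp_rw [Nat.card_eq_fintype_card, Fintype.card_subtype]
  exact sum_card_bipartiteAbove_eq_sum_card_bipartiteBelow (s := univ) (t := S) P

open scoped Classical in
lemma rainbowCount_eq_card_filter (ι : (Fin k → Fin n) → Fin n) :
    rainbowCount n k ι =
      #((perfectMatchings n k).filter fun M : Finset (Fin k → Fin n) => Set.InjOn ι M) := by
  rw [rainbowCount, Nat.card_eq_fintype_card, Fintype.card_subtype, perfectMatchings,
    filter_filter]

lemma sum_rainbowCount :
    ∑ ι, rainbowCount n k ι =
      ∑ M ∈ perfectMatchings n k, Nat.card {ι : (Fin k → Fin n) → Fin n // Set.InjOn ι M} := by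
  classical
  simp only [rainbowCount_eq_card_filter]
  exact sum_card_filter_eq_sum_natCard _ _

lemma sum_rainbowCount_sq :
    ∑ ι, rainbowCount n k ι ^ 2 =
      ∑ p ∈ perfectMatchings n k ×ˢ perfectMatchings n k,
        Nat.card {ι : (Fin k → Fin n) → Fin n // Set.InjOn ι p.1 ∧ Set.InjOn ι p.2} := by
  classical
  simp only [rainbowCount_eq_card_filter, sq, ← card_product, ← filter_product]
  exact sum_card_filter_eq_sum_natCard _
    (fun (ι : (Fin k → Fin n) → Fin n) (p : Finset (Fin k → Fin n) × Finset (Fin k → Fin n)) =>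
      Set.InjOn ι p.1 ∧ Set.InjOn ι p.2)

section Moments

variable [NeZero k] {M M' : Finset (Fin k → Fin n)}

lemma natCard_injOn_div (hn : n ≠ 0) (hM : IsPerfectMatching n k M) :
    (Nat.card {ι : (Fin k → Fin n) → Fin n // Set.InjOn ι M} : ℝ) / n ^ n ^ k =
      n ! / n ^ n := by
  have hN : (n : ℝ) ^ (n ^ k - n) * n ^ n = n ^ n ^ k :=
    pow_sub_mul_pow _ (Nat.le_self_pow (NeZero.ne k) n)
  rw [card_injOn, ← hN]
  simp only [Fintype.card_fin, Fintype.card_fun, hM.card_eq, Nat.descFactorial_self]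
  push_cast
  field_simp

lemma natCard_injOn_and_injOn_div_le (hn : n ≠ 0) (hM : IsPerfectMatching n k M)
    (hM' : IsPerfectMatching n k M') :
    (Nat.card {ι : (Fin k → Fin n) → Fin n // Set.InjOn ι M ∧ Set.InjOn ι M'} : ℝ) / n ^ n ^ k ≤
      n ! / n ^ (2 * n) * overlapWeight n #(M ∩ M') := by
  have hcount := card_injOn_and_injOn_le (β := Fin n) (s := M) (s' := M')
    (by simp [hM.card_eq]) (by simp [hM'.card_eq])
  simp only [Fintype.card_fin, Fintype.card_fun] at hcount
  have hunion : #(M ∪ M') + #(M ∩ M') = 2 * n := by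
    rw [card_union_add_card_inter, hM.card_eq, hM'.card_eq, two_mul]
  have hN : (n : ℝ) ^ (n ^ k - #(M ∪ M')) * n ^ #(M ∪ M') = n ^ n ^ k :=
    pow_sub_mul_pow _ ((card_le_univ _).trans_eq (by simp))
  calc _ ≤ ((n ! * (n - #(M ∩ M'))! * n ^ (n ^ k - #(M ∪ M')) : ℕ) : ℝ) / n ^ n ^ k :=
        div_le_div_of_nonneg_right (by exact_mod_cast hcount) (by positivity)
    _ = n ! / n ^ (2 * n) * overlapWeight n #(M ∩ M') := by
        rw [overlapWeight, ← hN, ← hunion, pow_add]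
        push_cast
        field_simp

lemma expectation_rainbowCount (hn : n ≠ 0) :
    (∑ ι, (rainbowCount n k ι : ℝ)) / n ^ n ^ k = #(perfectMatchings n k) * (n ! / n ^ n) := by
  rw [← Nat.cast_sum, sum_rainbowCount, Nat.cast_sum, sum_div,
    sum_congr rfl fun M hM => natCard_injOn_div hn (mem_perfectMatchings.1 hM), sum_const,
    nsmul_eq_mul]

lemma secondMoment_rainbowCount_le (hn : n ≠ 0) :
    (∑ ι, (rainbowCount n k ι : ℝ) ^ 2) / n ^ n ^ k ≤
      n ! / n ^ (2 * n) * ∑ p ∈ perfectMatchings n k ×ˢ perfectMatchings n k,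
        (overlapWeight n #(p.1 ∩ p.2) : ℝ) := by
  have hsq : ∑ ι, (rainbowCount n k ι : ℝ) ^ 2 =
      ∑ p ∈ perfectMatchings n k ×ˢ perfectMatchings n k,
        (Nat.card {ι : (Fin k → Fin n) → Fin n // Set.InjOn ι p.1 ∧ Set.InjOn ι p.2} : ℝ) := by
    exact_mod_cast sum_rainbowCount_sq
  rw [hsq, sum_div, mul_sum]
  refine sum_le_sum fun p hp => ?_
  obtain ⟨hp₁, hp₂⟩ := mem_product.1 hp
  exact natCard_injOn_and_injOn_div_le hn (mem_perfectMatchings.1 hp₁)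
    (mem_perfectMatchings.1 hp₂)

end Moments

/-- Let `X` be the number of rainbow perfect matchings of `K^{(n)}_{n,k}` with a uniformly
random `n`-coloring of the edges (`k ≥ 2` fixed). Then `E[X²] ≤ (1+o(1))·E[X]²` as `n → ∞`,
where expectations are averages over all `n^(n^k)` colorings. -/
theorem second_moment_rainbow (k : ℕ) (hk : 2 ≤ k) :
    ∃ f : ℕ → ℝ, Tendsto f atTop (nhds 0) ∧
      ∀ᶠ n : ℕ in atTop,
        (∑ ι : (Fin k → Fin n) → Fin n, (rainbowCount n k ι : ℝ) ^ 2) / (n : ℝ) ^ (n ^ k)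
          ≤ (1 + f n) *
            ((∑ ι : (Fin k → Fin n) → Fin n, (rainbowCount n k ι : ℝ)) / (n : ℝ) ^ (n ^ k)) ^ 2 := by
  obtain ⟨k, rfl⟩ : ∃ j, k = j + 1 + 1 := ⟨k - 2, by omega⟩
  refine ⟨overlapExcess, tendsto_overlapExcess, ?_⟩
  filter_upwards [eventually_ne_atTop 0] with n hn
  set P := perfectMatchings n (k + 1 + 1)
  have hoverlap := sum_overlapWeight_le (P ×ˢ P) (fun p => #(p.1 ∩ p.2))
    (fun p hp => (card_le_card inter_subset_left).trans
      (mem_perfectMatchings.1 (mem_product.1 hp).1).card_eq.le)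
    (fun t ht => card_filter_le_card_inter_mul_factorial_le k.succ_ne_zero (mem_Icc.1 ht).2)
  rw [expectation_rainbowCount hn]
  calc _ ≤ n ! / n ^ (2 * n) * ∑ p ∈ P ×ˢ P, (overlapWeight n #(p.1 ∩ p.2) : ℝ) :=
        secondMoment_rainbowCount_le hn
    _ ≤ n ! / n ^ (2 * n) * (#(P ×ˢ P) * n ! * (1 + overlapExcess n)) :=
        mul_le_mul_of_nonneg_left hoverlap (by positivity)
    _ = (1 + overlapExcess n) * (#P * (n ! / n ^ n)) ^ 2 := by
        rw [card_product]
        push_cast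
        ring
end

section
/- For all sufficiently large n, ∑_{ℓ=⌈log n⌉}^{n-⌈log n⌉} (e^k/(ℓ·n^{k-2}))^ℓ ≤ c·n·(e^k/log n)^{log n} for some constant c, and hence this sum tends to 0 as n → ∞ (k ≥ 2 fixed). -/
open Filter Finset Real

/-! Once `log n ≥ e^k`, every term of the sum is at most `(e^k / log n) ^ log n`, since the base
only shrinks and is at most `1` while the exponent only grows; there are at most `n` terms.
Once moreover `e^k / log n ≤ e^{-2}`, that common bound is at most `n^{-2}`, so the sum is `O(1/n)`. -/

lemma div_mul_pow_le_div_rpow {a L m : ℝ} {ℓ : ℕ} (ha : 0 < a) (haL : a ≤ L) (hLℓ : L ≤ ℓ)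
    (hm : 1 ≤ m) : (a / (ℓ * m)) ^ ℓ ≤ (a / L) ^ L := by
  have hL : 0 < L := ha.trans_le haL
  have hden : L ≤ ℓ * m := hLℓ.trans (le_mul_of_one_le_right (hL.le.trans hLℓ) hm)
  calc (a / (ℓ * m)) ^ ℓ ≤ (a / L) ^ ℓ := by gcongr
    _ = (a / L) ^ (ℓ : ℝ) := (rpow_natCast _ ℓ).symm
    _ ≤ (a / L) ^ L :=
      rpow_le_rpow_of_exponent_ge (div_pos ha hL) (div_le_one_of_le₀ haL hL.le) hLℓ

lemma card_Icc_ceil_sub_ceil_le {L : ℝ} (hL : 0 < L) (n : ℕ) :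
    #(Icc ⌈L⌉₊ (n - ⌈L⌉₊)) ≤ n := by
  have : 1 ≤ ⌈L⌉₊ := Nat.one_le_ceil_iff.mpr hL
  rw [Nat.card_Icc]
  omega

lemma sum_Icc_div_mul_pow_le {a L m : ℝ} (ha : 0 < a) (haL : a ≤ L) (hm : 1 ≤ m) (n : ℕ) :
    ∑ ℓ ∈ Icc ⌈L⌉₊ (n - ⌈L⌉₊), (a / (ℓ * m)) ^ ℓ ≤ n * (a / L) ^ L := by
  have hL : 0 < L := ha.trans_le haL
  calc ∑ ℓ ∈ Icc ⌈L⌉₊ (n - ⌈L⌉₊), (a / (ℓ * m)) ^ ℓ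
      ≤ #(Icc ⌈L⌉₊ (n - ⌈L⌉₊)) • (a / L) ^ L := by
        refine sum_le_card_nsmul _ _ _ fun ℓ hℓ => div_mul_pow_le_div_rpow ha haL ?_ hm
        exact (Nat.le_ceil L).trans (mod_cast (mem_Icc.mp hℓ).1)
    _ ≤ n * (a / L) ^ L := by
        rw [nsmul_eq_mul]
        gcongr
        exact_mod_cast card_Icc_ceil_sub_ceil_le hL n

lemma mul_div_log_rpow_log_le_inv {a x : ℝ} (ha : 0 ≤ a) (hx : 0 < x) (hlog : 0 < log x)
    (haLog : a ≤ exp (-2) * log x) : x * (a / log x) ^ log x ≤ x⁻¹ := by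
  have hbase : a / log x ≤ exp (-2) := (div_le_iff₀ hlog).mpr haLog
  calc x * (a / log x) ^ log x ≤ x * exp (-2) ^ log x := by gcongr
    _ = x * (x⁻¹ * x⁻¹) := by
        rw [← exp_mul, show -2 * log x = -log x + -log x by ring, exp_add, exp_neg, exp_log hx]
    _ = x⁻¹ := by field_simp

lemma tendsto_mul_div_log_rpow_log {a : ℝ} (ha : 0 ≤ a) :
    Tendsto (fun x => x * (a / log x) ^ log x) atTop (nhds 0) := by
  have hlog := tendsto_log_atTop
  refine tendsto_of_tendsto_of_tendsto_of_le_of_le' tendsto_const_nhds tendsto_inv_atTop_zero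
    ?_ ?_
  · filter_upwards [eventually_gt_atTop 0, hlog.eventually_gt_atTop 0] with x hx hlogx
    exact mul_nonneg hx.le (rpow_nonneg (div_nonneg ha hlogx.le) _)
  · filter_upwards [eventually_gt_atTop 0, hlog.eventually_gt_atTop 0,
      (hlog.const_mul_atTop (exp_pos (-2))).eventually_ge_atTop a] with x hx hlogx haLog
    exact mul_div_log_rpow_log_le_inv ha hx hlogx haLog

theorem middle_range_sum_small_general (k : ℕ) :
    ∃ c : ℝ, 0 < c ∧
      (∀ᶠ n : ℕ in atTop,
        ∑ ℓ ∈ Finset.Icc ⌈Real.log n⌉₊ (n - ⌈Real.log n⌉₊),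
            ((Real.exp 1) ^ k / ((ℓ : ℝ) * (n : ℝ) ^ (k - 2))) ^ ℓ
          ≤ c * n * ((Real.exp 1) ^ k / Real.log n) ^ (Real.log n)) ∧
      Tendsto (fun n : ℕ =>
          ∑ ℓ ∈ Finset.Icc ⌈Real.log n⌉₊ (n - ⌈Real.log n⌉₊),
            ((Real.exp 1) ^ k / ((ℓ : ℝ) * (n : ℝ) ^ (k - 2))) ^ ℓ)
        atTop (nhds 0) := by
  have hek : 0 < exp 1 ^ k := by positivity
  have hbound : ∀ᶠ n : ℕ in atTop,
      ∑ ℓ ∈ Icc ⌈log n⌉₊ (n - ⌈log n⌉₊), (exp 1 ^ k / ((ℓ : ℝ) * (n : ℝ) ^ (k - 2))) ^ ℓ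
        ≤ n * (exp 1 ^ k / log n) ^ log n := by
    filter_upwards [(tendsto_log_atTop.comp tendsto_natCast_atTop_atTop).eventually_ge_atTop
      (exp 1 ^ k), eventually_ge_atTop 1] with n hlog hn
    exact sum_Icc_div_mul_pow_le hek hlog (one_le_pow₀ (mod_cast hn)) n
  refine ⟨1, one_pos, by simpa only [one_mul] using hbound, ?_⟩
  refine tendsto_of_tendsto_of_tendsto_of_le_of_le' tendsto_const_nhds
    ((tendsto_mul_div_log_rpow_log hek.le).comp tendsto_natCast_atTop_atTop)
    (Eventually.of_forall fun n => sum_nonneg fun ℓ _ => by positivity) hbound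

/-- For fixed `k ≥ 2`, for all sufficiently large `n`,
`∑_{ℓ=⌈log n⌉}^{n-⌈log n⌉} (e^k/(ℓ·n^{k-2}))^ℓ ≤ c·n·(e^k/log n)^{log n}` for some
constant `c`, and hence this sum tends to `0` as `n → ∞`. -/
theorem middle_range_sum_small (k : ℕ) (hk : 2 ≤ k) :
    ∃ c : ℝ, 0 < c ∧
      (∀ᶠ n : ℕ in atTop,
        ∑ ℓ ∈ Finset.Icc ⌈Real.log n⌉₊ (n - ⌈Real.log n⌉₊),
            ((Real.exp 1) ^ k / ((ℓ : ℝ) * (n : ℝ) ^ (k - 2))) ^ ℓ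
          ≤ c * n * ((Real.exp 1) ^ k / Real.log n) ^ (Real.log n)) ∧
      Tendsto (fun n : ℕ =>
          ∑ ℓ ∈ Finset.Icc ⌈Real.log n⌉₊ (n - ⌈Real.log n⌉₊),
            ((Real.exp 1) ^ k / ((ℓ : ℝ) * (n : ℝ) ^ (k - 2))) ^ ℓ)
        atTop (nhds 0) :=
  middle_range_sum_small_general k
end

section
/- Lemma (rainbow max-to-median propagation): Suppose w: V_k × C → ℝ≥0 where V_k = U_1 × ... × U_k with |U_i| = n, |C| = n. Define ψ_0 = max_{v,c} w(v,c), and suppose B ≥ 0 satisfies ψ_0 ≥ 2^k·B. Assume: (i) for each partial tuple v missing coordinate j and each color c with max over completions ≥ B, at least n/2 completions w achieve at least half the max; (ii) for each full tuple v with max_c w(v,c) ≥ B, at least n/2 colors c achieve w(v,c) ≥ (1/2)·max_c w(v,c). Then |{(v,c) : w(v,c) ≥ ψ_0/2^{k+1}}| ≥ n^{k+1}/2^{k+1}. -/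
/-!
Start from a maximiser `(v₀, c₀)` of `w` and free the coordinates of `v₀` one at a time, keeping
the colour `c₀`. A tuple of value at least `ψ₀ / 2 ^ j` has, by (i), at least `n / 2` completions
in the next coordinate of value at least `ψ₀ / 2 ^ (j + 1)`, and distinct tuples give disjoint
completions; so after `j` steps at least `(n / 2) ^ j` tuples reach `ψ₀ / 2 ^ j`. Hypothesis (ii)
then supplies `n / 2` colours per tuple at level `ψ₀ / 2 ^ (k + 1)`. The threshold `B` is never
an obstacle, since `ψ₀ / 2 ^ j ≥ 2 ^ (k - j) B ≥ B` for `j ≤ k`.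
-/

open Finset Function

theorem card_mul_le_card_of_le_card_fiber {α β : Type*} [DecidableEq α] {s : Finset α}
    {t : Finset β} (π : β → α) {r : ℝ} (h : ∀ a ∈ s, r ≤ #{b ∈ t | π b = a}) :
    #s * r ≤ #t := by
  have hbelow : ∀ b ∈ t, (#{a ∈ s | π b = a} : ℝ) ≤ 1 := fun b _ ↦ by
    exact_mod_cast card_le_one.2 fun a ha a' ha' ↦ by
      simp only [mem_filter] at ha ha'
      exact ha.2.symm.trans ha'.2
  simpa using card_nsmul_le_card_nsmul (fun a b ↦ π b = a) h hbelow

theorem le_card_half_superlevel {ι : Type*} [Fintype ι] {h : ι → ℝ} {B t r : ℝ} (hBt : B ≤ t)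
    (ht : ∃ i, t ≤ h i)
    (hhalf : ∀ m, IsGreatest {x | ∃ i, x = h i} m → B ≤ m → r ≤ Nat.card {i // m / 2 ≤ h i}) :
    r ≤ #{i | t / 2 ≤ h i} := by
  classical
  obtain ⟨i, hti⟩ := ht
  have : Nonempty ι := ⟨i⟩
  obtain ⟨i₀, hi₀⟩ := Finite.exists_max h
  calc r ≤ Nat.card {i // h i₀ / 2 ≤ h i} :=
        hhalf _ ⟨⟨i₀, rfl⟩, by rintro _ ⟨j, rfl⟩; exact hi₀ j⟩ (hBt.trans (hti.trans (hi₀ i)))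
    _ ≤ #{i | t / 2 ≤ h i} := by
        rw [Nat.card_eq_fintype_card, Fintype.card_subtype]
        gcongr
        exact hti.trans (hi₀ i)

theorem card_mul_le_card_superlevel_prod {X γ : Type*} [Fintype X] [Fintype γ] [DecidableEq X]
    {w : X → γ → ℝ} {S : Finset X} {B t r : ℝ} (hBt : B ≤ t) (hS : ∀ v ∈ S, ∃ c, t ≤ w v c)
    (hhalf : ∀ v m, IsGreatest {x | ∃ c, x = w v c} m → B ≤ m →
      r ≤ Nat.card {c // m / 2 ≤ w v c}) :
    #S * r ≤ #{p : X × γ | t / 2 ≤ w p.1 p.2} := by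
  refine card_mul_le_card_of_le_card_fiber Prod.fst fun v hv ↦ ?_
  calc r ≤ #{c | t / 2 ≤ w v c} := le_card_half_superlevel hBt (hS v hv) (hhalf v)
    _ ≤ #{p : X × γ | t / 2 ≤ w p.1 p.2 ∧ p.1 = v} := by
        refine Nat.cast_le.2 <|
          card_le_card_of_injOn (Prod.mk v) (fun c hc ↦ ?_) (Prod.mk_right_injective v).injOn
        simpa using hc
    _ = #{p ∈ {p : X × γ | t / 2 ≤ w p.1 p.2} | p.1 = v} := by rw [filter_filter]

theorem le_div_two_pow_of_two_pow_mul_le {B ψ : ℝ} {j k : ℕ} (hB : 0 ≤ B) (hψ : 2 ^ k * B ≤ ψ)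
    (hj : j ≤ k) : B ≤ ψ / 2 ^ j := by
  rw [le_div_iff₀ (by positivity), mul_comm]
  calc 2 ^ j * B ≤ 2 ^ k * B := by gcongr; norm_num
    _ ≤ ψ := hψ

section FreeCoordinates

variable {k : ℕ} {α γ : Type*} [Fintype α] [DecidableEq α] {w : (Fin k → α) → γ → ℝ} {c : γ}
  {v₀ : Fin k → α} {B r : ℝ}

open scoped Classical in
noncomputable def freedSuperlevel (w : (Fin k → α) → γ → ℝ) (c : γ) (v₀ : Fin k → α) (j : ℕ) :
    Finset (Fin k → α) :=
  {v | (∀ i : Fin k, j ≤ i → v i = v₀ i) ∧ w v₀ c / 2 ^ j ≤ w v c}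

theorem mul_le_card_freedSuperlevel_succ {j : ℕ} (hj : j < k) (hB : B ≤ w v₀ c / 2 ^ j)
    (hhalf : ∀ v m, IsGreatest {x | ∃ u, x = w (update v ⟨j, hj⟩ u) c} m → B ≤ m →
      r ≤ Nat.card {u // m / 2 ≤ w (update v ⟨j, hj⟩ u) c}) :
    #(freedSuperlevel w c v₀ j) * r ≤ #(freedSuperlevel w c v₀ (j + 1)) := by
  classical
  set jf : Fin k := ⟨j, hj⟩
  refine card_mul_le_card_of_le_card_fiber (fun v ↦ update v jf (v₀ jf)) fun v hv ↦ ?_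
  obtain ⟨hfix, hval⟩ : (∀ i : Fin k, j ≤ i → v i = v₀ i) ∧ w v₀ c / 2 ^ j ≤ w v c := by
    simpa [freedSuperlevel] using hv
  calc r ≤ #{u | w v₀ c / 2 ^ j / 2 ≤ w (update v jf u) c} :=
        le_card_half_superlevel hB ⟨v jf, by rwa [update_eq_self]⟩ (hhalf v)
    _ ≤ #{v' ∈ freedSuperlevel w c v₀ (j + 1) | update v' jf (v₀ jf) = v} := by
        refine Nat.cast_le.2 <|
          card_le_card_of_injOn (update v jf) (fun u hu ↦ ?_) (update_injective v jf).injOn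
        simp only [coe_filter, mem_univ, true_and, Set.mem_ofPred_eq] at hu
        have hmem : update v jf u ∈ freedSuperlevel w c v₀ (j + 1) := by
          simp only [freedSuperlevel, mem_filter, mem_univ, true_and, pow_succ, ← div_div]
          refine ⟨fun i hi ↦ ?_, hu⟩
          rw [update_of_ne (fun h ↦ by simp [jf, Fin.ext_iff] at h; omega)]
          exact hfix i (by omega)
        rw [mem_coe, mem_filter, update_idem, ← hfix jf le_rfl, update_eq_self]
        exact ⟨hmem, rfl⟩

theorem pow_le_card_freedSuperlevel (hr : 0 ≤ r) (hB : ∀ j < k, B ≤ w v₀ c / 2 ^ j)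
    (hhalf : ∀ (j : Fin k) v m, IsGreatest {x | ∃ u, x = w (update v j u) c} m → B ≤ m →
      r ≤ Nat.card {u // m / 2 ≤ w (update v j u) c}) :
    ∀ j ≤ k, r ^ j ≤ #(freedSuperlevel w c v₀ j)
  | 0, _ => by
    have : v₀ ∈ freedSuperlevel w c v₀ 0 := by simp [freedSuperlevel]
    simpa using card_pos.2 ⟨v₀, this⟩
  | j + 1, hj => calc
    r ^ (j + 1) = r ^ j * r := pow_succ r j
    _ ≤ #(freedSuperlevel w c v₀ j) * r := by
      gcongr; exact pow_le_card_freedSuperlevel hr hB hhalf j (by omega)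
    _ ≤ #(freedSuperlevel w c v₀ (j + 1)) :=
      mul_le_card_freedSuperlevel_succ hj (hB j hj) (hhalf ⟨j, hj⟩)

end FreeCoordinates

theorem rainbow_max_to_median_general (n k : ℕ)
    (w : (Fin k → Fin n) → Fin n → ℝ)
    (B ψ₀ : ℝ) (hB : 0 ≤ B)
    (hψ₀ : IsGreatest {x : ℝ | ∃ v c, x = w v c} ψ₀)
    (hψ₀B : 2 ^ k * B ≤ ψ₀)
    (hi : ∀ (j : Fin k) (v : Fin k → Fin n) (c : Fin n) (m : ℝ),
        IsGreatest {x : ℝ | ∃ u : Fin n, x = w (Function.update v j u) c} m → B ≤ m →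
        (n : ℝ) / 2 ≤ (Nat.card {u : Fin n // m / 2 ≤ w (Function.update v j u) c} : ℝ))
    (hii : ∀ (v : Fin k → Fin n) (m : ℝ),
        IsGreatest {x : ℝ | ∃ c : Fin n, x = w v c} m → B ≤ m →
        (n : ℝ) / 2 ≤ (Nat.card {c : Fin n // m / 2 ≤ w v c} : ℝ)) :
    (n : ℝ) ^ (k + 1) / 2 ^ (k + 1)
      ≤ (Nat.card {p : (Fin k → Fin n) × Fin n // ψ₀ / 2 ^ (k + 1) ≤ w p.1 p.2} : ℝ) := by
  obtain ⟨⟨v₀, c₀, rfl⟩, -⟩ := hψ₀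
  have hBj : ∀ j ≤ k, B ≤ w v₀ c₀ / 2 ^ j := fun j ↦ le_div_two_pow_of_two_pow_mul_le hB hψ₀B
  have hS := pow_le_card_freedSuperlevel (v₀ := v₀) (by positivity) (fun j hj ↦ hBj j hj.le)
    (fun j v ↦ hi j v c₀) k le_rfl
  have hcolours := card_mul_le_card_superlevel_prod (S := freedSuperlevel w c₀ v₀ k)
    (hBj k le_rfl) (fun v hv ↦ ⟨c₀, by simp_all [freedSuperlevel]⟩) hii
  rw [Nat.card_eq_fintype_card, Fintype.card_subtype]
  calc (n : ℝ) ^ (k + 1) / 2 ^ (k + 1) = (n / 2) ^ k * (n / 2) := by rw [← pow_succ, div_pow]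
    _ ≤ #(freedSuperlevel w c₀ v₀ k) * (n / 2) := by gcongr
    _ ≤ _ := by simpa only [div_div, ← pow_succ] using hcolours

/-- Rainbow max-to-median propagation (Lemma 4.2 of the paper). Let
`w : V_k × C → ℝ≥0` where `V_k = U_1 × ⋯ × U_k` with `|U_i| = n` (modelled as
`Fin k → Fin n`) and `|C| = n`. Let `ψ₀ = max_{v,c} w(v,c)` and suppose `ψ₀ ≥ 2^k·B`.
Assume: (i) for each coordinate `j`, each tuple `v` and color `c`, if the maximum `m`
of `w` over completions of `v` at coordinate `j` satisfies `m ≥ B`, then at least `n/2`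
completions achieve at least `m/2`; (ii) for each full tuple `v`, if `m = max_c w(v,c) ≥ B`
then at least `n/2` colors `c` achieve `w(v,c) ≥ m/2`. Then
`|{(v,c) : w(v,c) ≥ ψ₀/2^{k+1}}| ≥ n^{k+1}/2^{k+1}`. -/
theorem rainbow_max_to_median (n k : ℕ) (hn : 0 < n) (hk : 1 ≤ k)
    (w : (Fin k → Fin n) → Fin n → ℝ) (hw : ∀ v c, 0 ≤ w v c)
    (B ψ₀ : ℝ) (hB : 0 ≤ B)
    (hψ₀ : IsGreatest {x : ℝ | ∃ v c, x = w v c} ψ₀)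
    (hψ₀B : 2 ^ k * B ≤ ψ₀)
    (hi : ∀ (j : Fin k) (v : Fin k → Fin n) (c : Fin n) (m : ℝ),
        IsGreatest {x : ℝ | ∃ u : Fin n, x = w (Function.update v j u) c} m → B ≤ m →
        (n : ℝ) / 2 ≤ (Nat.card {u : Fin n // m / 2 ≤ w (Function.update v j u) c} : ℝ))
    (hii : ∀ (v : Fin k → Fin n) (m : ℝ),
        IsGreatest {x : ℝ | ∃ c : Fin n, x = w v c} m → B ≤ m →
        (n : ℝ) / 2 ≤ (Nat.card {c : Fin n // m / 2 ≤ w v c} : ℝ)) :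
    (n : ℝ) ^ (k + 1) / 2 ^ (k + 1)
      ≤ (Nat.card {p : (Fin k → Fin n) × Fin n // ψ₀ / 2 ^ (k + 1) ≤ w p.1 p.2} : ℝ) :=
  rainbow_max_to_median_general n k w B ψ₀ hB hψ₀ hψ₀B hi hii
end
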